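/- arXiv:1410.7219 — 2 statements merged into one kernel-verified Lean document; each statement's English description precedes it below -/
import Mathlib

section
/- (Euler's pentagonal number theorem, specialization z=2 of Nekrasov–Okounkov) As formal power series, ∏_{n≥1} (1 - x^n) = ∑_{n ∈ ℤ} (-1)^n x^{(3n^2+n)/2}. -/
/-!
Factors `1 - X ^ (n + 1)` with `n ≥ N` are `≡ 1 mod X ^ (N + 1)`, so the `N`-th coefficient of the
finite product is that of the infinite one, which Mathlib's pentagonal number theorem identifies
with `pentagonalSeries`. On the other side, `3 n ^ 2 + n = 2 N` says exactly that `N` is the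
pentagonal number `pentagonal (-n)`, and `pentagonal` is injective, so the sum has at most one
nonzero term.
-/

open PowerSeries Finset

theorem three_mul_sq_add_self_eq_two_mul_iff {n : ℤ} {N : ℕ} :
    3 * n ^ 2 + n = 2 * (N : ℤ) ↔ pentagonal (-n) = N := by
  have h := two_mul_natCast_pentagonal_neg n
  constructor
  · intro hn
    exact_mod_cast (show (pentagonal (-n) : ℤ) = N by linarith)
  · intro hn
    rw [← hn]
    linarith

theorem natAbs_le_pentagonal (k : ℤ) : k.natAbs ≤ pentagonal k := by
  have h := two_mul_natCast_pentagonal k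
  zify
  rcases abs_cases k with ⟨hk, -⟩ | ⟨hk, -⟩ <;> rw [hk] <;> nlinarith

namespace PowerSeries

variable {R : Type*} [CommRing R]

theorem coeff_mul_of_X_pow_dvd_sub_one {N : ℕ} {g : R⟦X⟧} (hg : X ^ (N + 1) ∣ g - 1)
    (f : R⟦X⟧) : coeff N (g * f) = coeff N f := by
  have : X ^ (N + 1) ∣ g * f - f := by
    simpa only [sub_mul, one_mul] using dvd_mul_of_dvd_left hg f
  rw [← sub_eq_zero, ← map_sub]
  exact X_pow_dvd_iff.1 this N N.lt_succ_self

theorem X_pow_dvd_prod_one_sub_X_pow_sub_one {N : ℕ} {t : Finset ℕ} (ht : ∀ n ∈ t, N ≤ n) :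
    X ^ (N + 1) ∣ ∏ n ∈ t, (1 - X ^ (n + 1) : R⟦X⟧) - 1 := by
  refine prod_induction _ (fun g => X ^ (N + 1) ∣ g - 1) (fun p q hp hq => ?_) (by simp)
    (fun n hn => ?_)
  · rw [show p * q - 1 = (p - 1) * q + (q - 1) by ring]
    exact dvd_add (dvd_mul_of_dvd_left hp q) hq
  · rw [sub_sub_cancel_left, dvd_neg]
    exact pow_dvd_pow X (Nat.succ_le_succ (ht n hn))

theorem coeff_prod_one_sub_X_pow_of_range_subset {N : ℕ} {s : Finset ℕ}
    (hs : range (N + 1) ⊆ s) :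
    coeff N (∏ n ∈ s, (1 - X ^ (n + 1) : R⟦X⟧)) =
      coeff N (∏ n ∈ range (N + 1), (1 - X ^ (n + 1) : R⟦X⟧)) := by
  rw [← prod_sdiff hs]
  refine coeff_mul_of_X_pow_dvd_sub_one (X_pow_dvd_prod_one_sub_X_pow_sub_one fun n hn => ?_) _
  exact (show N < n by simpa using (mem_sdiff.1 hn).2).le

theorem coeff_prod_range_one_sub_X_pow (N : ℕ) :
    coeff N (∏ n ∈ range (N + 1), (1 - X ^ (n + 1) : R⟦X⟧)) = coeff N (pentagonalSeries R) := by
  obtain ⟨s, hs⟩ := Filter.eventually_atTop.1 (coeff_prod_one_sub_X_pow_eventually_eq R N)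
  rw [← coeff_prod_one_sub_X_pow_of_range_subset (s := s ∪ range (N + 1)) subset_union_right]
  exact hs _ subset_union_left

theorem coeff_pentagonalSeries_eq_sum_Icc (N : ℕ) :
    coeff N (pentagonalSeries ℤ) =
      ∑ n ∈ Icc (-(N : ℤ) - 1) (N + 1), if pentagonal (-n) = N then (-1) ^ n.natAbs else 0 := by
  by_cases hN : N ∈ Set.range pentagonal
  · obtain ⟨k, rfl⟩ := hN
    simp_rw [pentagonal_inj, neg_eq_iff_eq_neg, sum_ite_eq']
    have := natAbs_le_pentagonal k
    rw [coeff_pentagonalSeries_pentagonal, if_pos (mem_Icc.2 ⟨by omega, by omega⟩),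
      Int.natAbs_neg, ← Int.coe_negOnePow_natCast, Int.natCast_natAbs, Int.negOnePow_abs,
      Int.cast_id]
  · rw [coeff_pentagonalSeries_eq_zero ℤ hN]
    exact (sum_eq_zero fun n _ => if_neg fun hn => hN ⟨-n, hn⟩).symm

end PowerSeries

theorem stmt_13 :
    ∀ N : ℕ,
      (PowerSeries.coeff (R := ℤ) N) (∏ n ∈ Finset.range (N+1), (1 - (PowerSeries.X : ℤ⟦X⟧)^(n+1))) =
        ∑ n ∈ Finset.Icc (-(N:ℤ)-1) ((N:ℤ)+1),
          if 3*n^2 + n = 2*(N:ℤ) then (-1)^n.natAbs else 0 := by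
  intro N
  simp_rw [three_mul_sq_add_self_eq_two_mul_iff]
  rw [coeff_prod_range_one_sub_X_pow, coeff_pentagonalSeries_eq_sum_Icc]
end

section
/- (Jacobi's identity, specialization z=4 of Nekrasov–Okounkov) As formal power series, ∏_{n≥1} (1 - x^n)^3 = ∑_{n≥0} (-1)^n (2n+1) x^{n(n+1)/2}. -/
/-!
Jacobi's identity is the derivative at `z = -1` of the triple product identity, and it follows from
a finite form of the latter. Writing `T k = k(k+1)/2` for all integers `k`, the coefficient of `z^i`
in `∏_{j<a} (1 + q^{j+1} z) · ∏_{j<b} (z + q^j)` is `q^{T(i-b)} [a+b, i]_q`: induct on `b`, starting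
from Cauchy's `q`-binomial theorem at `b = 0`. For `a = n`, `b = n + 1` only the factor `z + 1`
vanishes at `z = -1`, so differentiating there gives
`(-1)^n (q;q)_n^2 = ∑_{i ≤ 2n} (i+1) (-1)^i q^{T(i-n)} [2n+1, i+1]_q`.
In `R⟦X⟧` with `q = X`, the product `(q;q)_n [2n+1, i+1]_q` is a product of factors `1 - X^j` with
`j` large, and it is `≡ 1` modulo `X^{n+1-T(i-n)}`. Multiplying the identity by `(q;q)_n` therefore gives
`(q;q)_n^3 ≡ ∑_{k ≤ n} (-1)^k (2k+1) X^{T k}` modulo `X^{n+1}`. The terms `i = n + k` and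
`i = n - 1 - k` combine because `T(-k-1) = T k`.
-/

open Finset

def triangular (k : ℤ) : ℕ := (k * (k + 1) / 2).toNat

lemma triangular_add_one (k : ℤ) : (triangular (k + 1) : ℤ) = triangular k + k + 1 := by
  have hnonneg : ∀ j : ℤ, 0 ≤ j * (j + 1) := fun j => by
    rcases le_or_gt 0 j with h | h <;> nlinarith
  obtain ⟨m, hm⟩ := (Int.even_mul_succ_self k).two_dvd
  have hm' : (k + 1) * (k + 1 + 1) = 2 * (m + k + 1) := by linarith
  have h₁ := hnonneg k
  have h₂ := hnonneg (k + 1)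
  simp only [triangular, hm, hm', Int.mul_ediv_cancel_left _ two_ne_zero] at h₁ h₂ ⊢
  omega

lemma triangular_natCast (n : ℕ) : triangular n = (n + 1).choose 2 := by
  induction n with
  | zero => rfl
  | succ n ih =>
    have := triangular_add_one n
    rw [Nat.choose_succ_succ' (n + 1) 1, Nat.choose_one_right, ← ih]
    push_cast at this ⊢
    omega

lemma triangular_neg_sub_one (k : ℤ) : triangular (-k - 1) = triangular k := by
  simp only [triangular]
  ring_nf

lemma le_triangular (n : ℕ) : n ≤ triangular n := by
  rw [triangular_natCast, Nat.choose_succ_succ', Nat.choose_one_right]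
  omega

section CommRing

open Polynomial

variable {R : Type*} [CommRing R] (q : R)

def gaussBinom : ℕ → ℕ → R
  | _, 0 => 1
  | 0, _ + 1 => 0
  | m + 1, k + 1 => gaussBinom m k + q ^ (k + 1) * gaussBinom m (k + 1)

def qPochhammer (n : ℕ) : R := ∏ j ∈ range n, (1 - q ^ (j + 1))

@[simp] lemma gaussBinom_zero_right (m : ℕ) : gaussBinom q m 0 = 1 := by cases m <;> rfl

@[simp] lemma gaussBinom_zero_succ (k : ℕ) : gaussBinom q 0 (k + 1) = 0 := rfl

lemma gaussBinom_succ_succ (m k : ℕ) :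
    gaussBinom q (m + 1) (k + 1) = gaussBinom q m k + q ^ (k + 1) * gaussBinom q m (k + 1) := rfl

lemma gaussBinom_eq_zero_of_lt {m k : ℕ} (h : m < k) : gaussBinom q m k = 0 := by
  induction m generalizing k with
  | zero => obtain ⟨k, rfl⟩ := Nat.exists_eq_succ_of_ne_zero h.ne'; rfl
  | succ m ih =>
    obtain ⟨k, rfl⟩ := Nat.exists_eq_succ_of_ne_zero (Nat.ne_zero_of_lt h)
    rw [gaussBinom_succ_succ, ih (by omega), ih (by omega), mul_zero, add_zero]

@[simp] lemma gaussBinom_self (m : ℕ) : gaussBinom q m m = 1 := by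
  induction m with
  | zero => rfl
  | succ m ih =>
    rw [gaussBinom_succ_succ, ih, gaussBinom_eq_zero_of_lt q m.lt_succ_self, mul_zero, add_zero]

@[simp] lemma qPochhammer_zero : qPochhammer q 0 = 1 := prod_range_zero _

lemma qPochhammer_succ (n : ℕ) : qPochhammer q (n + 1) = qPochhammer q n * (1 - q ^ (n + 1)) :=
  prod_range_succ _ _

lemma qPochhammer_mul_qPochhammer_mul_gaussBinom (k l : ℕ) :
    qPochhammer q k * qPochhammer q l * gaussBinom q (k + l) k = qPochhammer q (k + l) := by
  induction h : k + l generalizing k l with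
  | zero =>
    obtain ⟨rfl, rfl⟩ : k = 0 ∧ l = 0 := by omega
    simp
  | succ m ih =>
    rcases k with _ | k
    · simp [← h]
    rcases l with _ | l
    · simp [← h]
    obtain rfl : m = k + l + 1 := by omega
    have ih₁ := ih k (l + 1) (by omega)
    have ih₂ := ih (k + 1) l (by omega)
    rw [qPochhammer_succ q l] at ih₁
    rw [qPochhammer_succ q k] at ih₂
    rw [gaussBinom_succ_succ, qPochhammer_succ q k, qPochhammer_succ q l,
      qPochhammer_succ q (k + l + 1)]
    linear_combination (1 - q ^ (k + 1)) * ih₁ + q ^ (k + 1) * (1 - q ^ (l + 1)) * ih₂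

lemma coeff_mul_X_add_C_succ (p : R[X]) (c : R) (i : ℕ) :
    (p * (X + C c)).coeff (i + 1) = p.coeff i + c * p.coeff (i + 1) := by
  rw [mul_add, coeff_add, coeff_mul_X, coeff_mul_C, mul_comm]

theorem coeff_prod_one_add_C_mul_X (a : ℕ) (w : R) (i : ℕ) :
    (∏ j ∈ range a, (1 + C (q ^ j * w) * X)).coeff i =
      q ^ i.choose 2 * w ^ i * gaussBinom q a i := by
  induction a generalizing w i with
  | zero => cases i <;> simp [coeff_one]
  | succ a ih =>
    have hshift : ∀ j, 1 + C (q ^ (j + 1) * w) * X = 1 + C (q ^ j * (q * w)) * (X : R[X]) :=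
      fun j => by ring_nf
    rw [prod_range_succ', prod_congr rfl fun j _ => hshift j, mul_add, mul_one, ← mul_assoc,
      coeff_add]
    rcases i with _ | i
    · rw [coeff_mul_X_zero, ih]
      simp
    · rw [coeff_mul_X, coeff_mul_C, ih, ih, gaussBinom_succ_succ, Nat.choose_succ_succ',
        Nat.choose_one_right]
      ring

noncomputable def finiteTripleProduct (a b : ℕ) : R[X] :=
  (∏ j ∈ range a, (1 + C (q ^ (j + 1)) * X)) * ∏ j ∈ range b, (X + C (q ^ j))

theorem coeff_finiteTripleProduct (a b i : ℕ) :
    (finiteTripleProduct q a b).coeff i = q ^ triangular (i - b) * gaussBinom q (a + b) i := by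
  induction b generalizing i with
  | zero =>
    simp_rw [finiteTripleProduct, prod_range_zero, mul_one, pow_succ, coeff_prod_one_add_C_mul_X,
      add_zero, Nat.cast_zero, sub_zero, triangular_natCast, Nat.choose_succ_succ',
      Nat.choose_one_right, pow_add]
    ring
  | succ b ih =>
    rw [finiteTripleProduct, prod_range_succ, ← mul_assoc, ← finiteTripleProduct]
    rcases i with _ | i
    · have := triangular_add_one (-b - 1)
      rw [mul_add, coeff_add, coeff_mul_X_zero, coeff_mul_C, ih, gaussBinom_zero_right,
        gaussBinom_zero_right, zero_add, mul_one, mul_one, ← pow_add,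
        show ((0 : ℕ) : ℤ) - (b + 1 : ℕ) = -b - 1 by push_cast; ring,
        show ((0 : ℕ) : ℤ) - b = -b - 1 + 1 by push_cast; ring]
      congr 1
      omega
    · have := triangular_add_one (i - b)
      rw [coeff_mul_X_add_C_succ, ih, ih, ← add_assoc, gaussBinom_succ_succ,
        show ((i + 1 : ℕ) : ℤ) - (b + 1 : ℕ) = i - b by push_cast; ring,
        show ((i + 1 : ℕ) : ℤ) - b = i - b + 1 by push_cast; ring,
        ← mul_assoc, ← pow_add, show b + triangular (i - b + 1) = triangular (i - b) + (i + 1) by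
          omega, pow_add]
      ring

lemma eval_neg_one_derivative_finiteTripleProduct (a b : ℕ) :
    (finiteTripleProduct q a (b + 1)).derivative.eval (-1) =
      (-1) ^ b * qPochhammer q a * qPochhammer q b := by
  have hfactor : finiteTripleProduct q a (b + 1) =
      (∏ j ∈ range a, (1 + C (q ^ (j + 1)) * X)) * (∏ j ∈ range b, (X + C (q ^ (j + 1)))) *
        (X + 1) := by
    rw [finiteTripleProduct, prod_range_succ', pow_zero, C_1, mul_assoc]
  have hsign : ∀ j : ℕ, -1 + q ^ (j + 1) = -1 * (1 - q ^ (j + 1)) := fun j => by ring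
  simp only [hfactor, derivative_mul, derivative_add, derivative_X, derivative_one, add_zero,
    mul_one, eval_add, eval_mul, eval_X, eval_one, neg_add_cancel, mul_zero, zero_add, eval_prod,
    eval_C, mul_neg_one, ← sub_eq_add_neg, hsign, prod_mul_distrib, prod_const, card_range]
  rw [qPochhammer, qPochhammer]
  ring

theorem sum_range_gaussBinom_eq_qPochhammer_mul_qPochhammer (a b : ℕ) :
    ∑ i ∈ range (a + b + 1),
        ((i : R) + 1) * (-1) ^ i * (q ^ triangular (i - b) * gaussBinom q (a + b + 1) (i + 1)) =
      (-1) ^ b * qPochhammer q a * qPochhammer q b := by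
  set P := finiteTripleProduct q a (b + 1)
  have hcoeff : ∀ i, P.coeff (i + 1) =
      q ^ triangular (i - b) * gaussBinom q (a + b + 1) (i + 1) := fun i => by
    rw [coeff_finiteTripleProduct]
    push_cast
    ring_nf
  have hdeg : P.derivative.natDegree < a + b + 1 := by
    refine Nat.lt_succ_of_le (natDegree_le_iff_coeff_eq_zero.2 fun N hN => ?_)
    rw [coeff_derivative, hcoeff, gaussBinom_eq_zero_of_lt q (by omega), mul_zero, zero_mul]
  rw [← eval_neg_one_derivative_finiteTripleProduct, eval_eq_sum_range' hdeg]
  refine sum_congr rfl fun i _ => ?_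
  rw [coeff_derivative, hcoeff]
  ring

lemma sum_range_neg_one_pow_mul_pow_triangular (n : ℕ) :
    ∑ i ∈ range (2 * n + 1), ((i : R) + 1) * (-1) ^ i * q ^ triangular (i - n) =
      (-1) ^ n * ∑ k ∈ range (n + 1), (-1) ^ k * (2 * k + 1) * q ^ triangular k := by
  set f : ℕ → R := fun i => ((i : R) + 1) * (-1) ^ i * q ^ triangular (i - n)
  set g : ℕ → R := fun k => -((n : R) - k) * (-1) ^ (n + k) * q ^ triangular k
  have hlow : ∀ k ∈ range n, f (n - 1 - k) = g k := by
    intro k hk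
    have hk : k < n := mem_range.1 hk
    have hsign : (-1 : R) ^ (n - 1 - k) = -(-1) ^ (n + k) := by
      rw [show n + k = (n - 1 - k) + 2 * k + 1 by omega, pow_succ, pow_add, pow_mul]
      simp
    have hcast : ((n - 1 - k : ℕ) : R) + 1 = n - k := by
      rw [Nat.sub_sub, Nat.cast_sub (by omega)]
      push_cast
      ring
    simp only [f, g]
    rw [hsign, show ((n - 1 - k : ℕ) : ℤ) - n = -k - 1 by omega, triangular_neg_sub_one, hcast]
    ring
  have hhigh : ∀ k ∈ range (n + 1),
      f (n + k) = ((n : R) + k + 1) * (-1) ^ (n + k) * q ^ triangular k := by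
    intro k _
    simp only [f]
    push_cast
    ring_nf
  rw [show 2 * n + 1 = n + (n + 1) by ring, sum_range_add, ← sum_range_reflect, sum_congr rfl hlow,
    sum_congr rfl hhigh, ← add_zero (∑ k ∈ range n, g k), show (0 : R) = g n by simp [g],
    ← sum_range_succ, ← sum_add_distrib, mul_sum]
  refine sum_congr rfl fun k _ => ?_
  simp only [g]
  rw [pow_add]
  ring

lemma pow_dvd_prod_one_sub_pow_sub_one {d : ℕ} {s : Finset ℕ} (h : ∀ k ∈ s, d ≤ k + 1) :
    q ^ d ∣ ∏ k ∈ s, (1 - q ^ (k + 1)) - 1 := by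
  rw [← Ideal.mem_span_singleton, ← Ideal.Quotient.eq_zero_iff_mem, map_sub, map_one, map_prod,
    sub_eq_zero]
  refine prod_eq_one fun k hk => ?_
  rw [map_sub, map_one, Ideal.Quotient.eq_zero_iff_mem.2
    (Ideal.mem_span_singleton.2 (pow_dvd_pow q (h k hk))), sub_zero]

end CommRing

open PowerSeries

section PowerSeries

variable {R : Type*} [CommRing R]

lemma isUnit_qPochhammer_X (n : ℕ) : IsUnit (qPochhammer (X : R⟦X⟧) n) := by
  simp [isUnit_iff_constantCoeff, qPochhammer]

lemma gaussBinom_X_symm (i j : ℕ) :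
    gaussBinom (X : R⟦X⟧) (i + j) i = gaussBinom X (i + j) j := by
  have h := qPochhammer_mul_qPochhammer_mul_gaussBinom (X : R⟦X⟧) j i
  rw [mul_comm (qPochhammer X j), add_comm j i,
    ← qPochhammer_mul_qPochhammer_mul_gaussBinom X i j] at h
  exact ((isUnit_qPochhammer_X i).mul (isUnit_qPochhammer_X j)).mul_left_cancel h.symm

lemma qPochhammer_X_mul_gaussBinom {l n : ℕ} (j : ℕ) (hl : l ≤ n) :
    qPochhammer (X : R⟦X⟧) n * gaussBinom X (l + j) l =
      (∏ k ∈ Ico l n, (1 - X ^ (k + 1))) * ∏ k ∈ Ico j (l + j), (1 - X ^ (k + 1)) := by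
  refine ((isUnit_qPochhammer_X l).mul (isUnit_qPochhammer_X j)).mul_left_cancel ?_
  calc qPochhammer X l * qPochhammer X j * (qPochhammer X n * gaussBinom X (l + j) l)
      = qPochhammer X n * qPochhammer (X : R⟦X⟧) (l + j) := by
        rw [← qPochhammer_mul_qPochhammer_mul_gaussBinom]
        ring
    _ = _ := by
        rw [qPochhammer, qPochhammer, ← prod_range_mul_prod_Ico _ hl,
          ← prod_range_mul_prod_Ico _ (Nat.le_add_left j l), qPochhammer, qPochhammer]
        ring

lemma X_pow_dvd_qPochhammer_X_mul_gaussBinom_sub_one {l n : ℕ} (j : ℕ) (hl : l ≤ n)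
    (hlj : l ≤ j) : (X : R⟦X⟧) ^ (l + 1) ∣ qPochhammer X n * gaussBinom X (l + j) l - 1 := by
  set A := ∏ k ∈ Ico l n, (1 - (X : R⟦X⟧) ^ (k + 1))
  set B := ∏ k ∈ Ico j (l + j), (1 - (X : R⟦X⟧) ^ (k + 1))
  have hA : X ^ (l + 1) ∣ A - 1 :=
    pow_dvd_prod_one_sub_pow_sub_one _ fun k hk => by rw [mem_Ico] at hk; omega
  have hB : X ^ (l + 1) ∣ B - 1 :=
    pow_dvd_prod_one_sub_pow_sub_one _ fun k hk => by rw [mem_Ico] at hk; omega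
  rw [qPochhammer_X_mul_gaussBinom j hl, show A * B - 1 = (A - 1) * B + (B - 1) by ring]
  exact dvd_add (dvd_mul_of_dvd_left hA B) hB

lemma X_pow_dvd_X_pow_triangular_mul_sub_one {n i : ℕ} (hi : i ≤ 2 * n) :
    (X : R⟦X⟧) ^ (n + 1) ∣
      X ^ triangular (i - n) * (qPochhammer X n * gaussBinom X (2 * n + 1) (i + 1) - 1) := by
  rcases lt_or_ge i n with h | h
  · obtain ⟨k, rfl⟩ : ∃ k, n = i + 1 + k := ⟨n - (i + 1), by omega⟩
    rw [show (i : ℤ) - (i + 1 + k : ℕ) = -k - 1 by push_cast; ring, triangular_neg_sub_one,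
      show 2 * (i + 1 + k) + 1 = (i + 1) + (i + 1 + 2 * k + 1) by ring,
      show i + 1 + k + 1 = k + (i + 1 + 1) by ring, pow_add]
    exact mul_dvd_mul (pow_dvd_pow _ (le_triangular k))
      (X_pow_dvd_qPochhammer_X_mul_gaussBinom_sub_one _ (by omega) (by omega))
  · obtain ⟨k, rfl⟩ : ∃ k, i = n + k := ⟨i - n, by omega⟩
    rw [show ((n + k : ℕ) : ℤ) - n = k by push_cast; ring,
      show 2 * n + 1 = (n - k) + (n + k + 1) by omega, ← gaussBinom_X_symm,
      show n + 1 = k + (n - k + 1) by omega, pow_add]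
    exact mul_dvd_mul (pow_dvd_pow _ (le_triangular k))
      (X_pow_dvd_qPochhammer_X_mul_gaussBinom_sub_one _ (by omega) (by omega))

theorem X_pow_dvd_qPochhammer_X_pow_three_sub (n : ℕ) :
    (X : R⟦X⟧) ^ (n + 1) ∣ qPochhammer X n ^ 3 -
      ∑ k ∈ range (n + 1), (-1) ^ k * (2 * (k : R⟦X⟧) + 1) * X ^ triangular k := by
  have hfin := sum_range_gaussBinom_eq_qPochhammer_mul_qPochhammer (X : R⟦X⟧) n n
  rw [← two_mul] at hfin
  rw [← (isUnit_neg_one.pow n).dvd_mul_left]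
  calc (X : R⟦X⟧) ^ (n + 1) ∣ ∑ i ∈ range (2 * n + 1), ((i : R⟦X⟧) + 1) * (-1) ^ i *
        (X ^ triangular (i - n) * (qPochhammer X n * gaussBinom X (2 * n + 1) (i + 1) - 1)) :=
        dvd_sum fun i hi => dvd_mul_of_dvd_right
          (X_pow_dvd_X_pow_triangular_mul_sub_one (by rw [mem_range] at hi; omega)) _
    _ = qPochhammer X n * ((-1) ^ n * qPochhammer X n * qPochhammer X n) -
        ∑ i ∈ range (2 * n + 1), ((i : R⟦X⟧) + 1) * (-1) ^ i * X ^ triangular (i - n) := by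
        rw [← hfin, mul_sum, ← sum_sub_distrib]
        exact sum_congr rfl fun i _ => by ring
    _ = _ := by
        rw [sum_range_neg_one_pow_mul_pow_triangular]
        ring

theorem coeff_qPochhammer_X_pow_three {N n : ℕ} (hN : N ≤ n) :
    coeff N (qPochhammer (X : R⟦X⟧) n ^ 3) =
      ∑ k ∈ range (n + 1), if triangular k = N then ((-1) ^ k * (2 * k + 1) : R) else 0 := by
  have h := X_pow_dvd_iff.1 (X_pow_dvd_qPochhammer_X_pow_three_sub (R := R) n) N (by omega)
  rw [map_sub, sub_eq_zero, map_sum] at h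
  rw [h]
  refine sum_congr rfl fun k _ => ?_
  rw [show (-1) ^ k * (2 * (k : R⟦X⟧) + 1) = C ((-1) ^ k * (2 * (k : R) + 1)) by simp [map_ofNat],
    coeff_C_mul, coeff_X_pow]
  simp [eq_comm]

end PowerSeries

theorem stmt_14 :
    ∀ N : ℕ,
      (PowerSeries.coeff N) (∏ n ∈ Finset.range (N+1), (1 - (PowerSeries.X : ℤ⟦X⟧)^(n+1))^3) =
        ∑ n ∈ Finset.range (N+1),
          if n*(n+1)/2 = N then ((-1)^n * (2*n+1) : ℤ) else 0 := by
  intro N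
  rw [prod_pow, ← qPochhammer, coeff_qPochhammer_X_pow_three N.le_succ, sum_range_succ,
    if_neg (by have := le_triangular (N + 1); omega), add_zero]
  refine sum_congr rfl fun k _ => ?_
  rw [triangular_natCast, Nat.choose_two_right, Nat.add_sub_cancel, mul_comm]
end
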